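/- Fix a vector p = (p_1,…,p_m) ∈ [0,1]^m, parameters ε, π̲0 ∈ (0,1) and a level α ∈ (0,1). Then: (i) the map κ ∈ [0,1−ε] ↦ π̂^IMS_{0,ε,π̲0,κ}(p) is nondecreasing and left-continuous; (ii) the supremum defining κ̂ is attained, i.e. F̂_m(κ̂) ≥ κ̂·π̂^IMS_{0,ε,π̲0,κ̂}(p)/α; (iii) the rejection set of ABH_α(π̂^IMS_{0,ε,π̲0,κ̂},κ̂) equals {i : p_i ≤ κ̂}; (iv) for every κ ∈ [0,1−ε], the rejection set of ABH_α(π̂^IMS_{0,ε,π̲0,κ},κ) is contained in {i : p_i ≤ κ̂}. -/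

import Mathlib

open MeasureTheory ProbabilityTheory
open scoped ENNReal

noncomputable section

open Classical in
/-- `orderStat p k` is the `k`-th smallest value of `p` (1-indexed), with `orderStat p 0 = 0`. -/
def orderStat {m : ℕ} (p : Fin m → ℝ) (k : ℕ) : ℝ :=
  if k = 0 then 0
  else sInf {t : ℝ | k ≤ (Finset.univ.filter fun i => p i ≤ t).card}

/-- The adaptive BH threshold sequence `t_k = min(κ, α k /(m π̂₀))`, with the
convention `1/0 = +∞` (so that the threshold is `κ` when `π̂₀ = 0`). -/
def bhThresh (m : ℕ) (α κ pi0 : ℝ) (k : ℕ) : ℝ :=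
  if pi0 = 0 then κ else min κ (α * k / (m * pi0))

open Classical in
/-- Number of rejections `k̂ = max{k ∈ [0,m] : p_(k) ≤ min(κ, α k/(m π̂₀))}` of the
adaptive BH procedure at level `α` with capping `κ` and estimated null proportion `pi0`. -/
def khat (m : ℕ) (α κ pi0 : ℝ) (p : Fin m → ℝ) : ℕ :=
  Nat.findGreatest (fun k => orderStat p k ≤ bhThresh m α κ pi0 k) m

open Classical in
/-- Rejection set of the adaptive BH procedure at level `α`, with (possibly data-driven)
capping `kap p` and null-proportion estimator `pihat`. -/
def rejectSet (m : ℕ) (α : ℝ) (pihat kap : (Fin m → ℝ) → ℝ) (p : Fin m → ℝ) :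
    Finset (Fin m) :=
  Finset.univ.filter fun i =>
    p i ≤ bhThresh m α (kap p) (pihat p) (khat m α (kap p) (pihat p) p)

open Classical in
/-- False discovery proportion of the adaptive BH procedure. -/
def FDP (m : ℕ) (H0 : Finset (Fin m)) (α : ℝ) (pihat kap : (Fin m → ℝ) → ℝ)
    (p : Fin m → ℝ) : ℝ :=
  ((H0.filter fun i =>
      p i ≤ bhThresh m α (kap p) (pihat p) (khat m α (kap p) (pihat p) p)).card : ℝ)
    / (max (khat m α (kap p) (pihat p) p) 1 : ℕ)

/-- False discovery rate of the adaptive BH procedure. -/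
def FDR {Ω : Type*} [MeasurableSpace Ω] (μ : Measure Ω) (m : ℕ) (H0 : Finset (Fin m))
    (α : ℝ) (pihat kap : (Fin m → ℝ) → ℝ) (p : Ω → Fin m → ℝ) : ℝ≥0∞ :=
  ∫⁻ ω, ENNReal.ofReal (FDP m H0 α pihat kap (p ω)) ∂μ

/-- Independent multiple-testing setting: `p`-values in `[0,1]`, mutually independent,
super-uniform under the null (`H0`). -/
def IndepSetting {Ω : Type*} [MeasurableSpace Ω] (μ : Measure Ω) (m : ℕ)
    (H0 : Finset (Fin m)) (p : Ω → Fin m → ℝ) : Prop :=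
  Measurable p ∧ (∀ ω i, p ω i ∈ Set.Icc (0 : ℝ) 1) ∧
    iIndepFun (fun i ω => p ω i) μ ∧
    ∀ i ∈ H0, ∀ t ∈ Set.Icc (0 : ℝ) 1, μ {ω | p ω i ≤ t} ≤ ENNReal.ofReal t

/-- Independent multiple-testing setting with (exactly) uniform null `p`-values. -/
def IndepUnifSetting {Ω : Type*} [MeasurableSpace Ω] (μ : Measure Ω) (m : ℕ)
    (H0 : Finset (Fin m)) (p : Ω → Fin m → ℝ) : Prop :=
  Measurable p ∧ (∀ ω i, p ω i ∈ Set.Icc (0 : ℝ) 1) ∧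
    iIndepFun (fun i ω => p ω i) μ ∧
    ∀ i ∈ H0, ∀ t ∈ Set.Icc (0 : ℝ) 1, μ {ω | p ω i ≤ t} = ENNReal.ofReal t

/-- The least favorable null distribution `Q_{0,s}` on `Fin s → ℝ` in the independent
setting: first coordinate `0`, remaining coordinates i.i.d. uniform on `(0,1)`. -/
def Q0 (s : ℕ) : Measure (Fin s → ℝ) :=
  Measure.pi fun i =>
    if (i : ℕ) = 0 then Measure.dirac 0 else volume.restrict (Set.Ioo 0 1)

open Classical in
/-- Inner random quantity in the normalizing factor `c(s,ε)`:
`1 ∨ max_{λ ∈ {q_i} ∩ (0,1-ε)} s(1-λ)/(1 ∨ #{i : q_i > λ})` (empty max taken as `1`). -/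
def cInner (s : ℕ) (ε : ℝ) (q : Fin s → ℝ) : ℝ :=
  max 1
    (WithBot.unbotD 1 (((Finset.univ.filter fun i : Fin s => 0 < q i ∧ q i < 1 - ε).image fun i =>
        (s : ℝ) * (1 - q i) /
          max 1 ((Finset.univ.filter fun j => q i < q j).card : ℝ)).max))

/-- The quantity `c(s,ε)`. -/
def cVal (s : ℕ) (ε : ℝ) : ℝ := ∫ q, cInner s ε q ∂(Q0 s)

open Classical in
/-- The normalizing factor `C(m,ε,π̲₀) = max{c(s,ε) : π̲₀ m ≤ s ≤ m}`. -/
def Cfac (m : ℕ) (ε pl : ℝ) : ℝ :=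
  WithBot.unbotD 1 (((Finset.range (m + 1)).filter fun s : ℕ => pl * (m : ℝ) ≤ (s : ℝ)).image fun s =>
    cVal s ε).max

open Classical in
/-- Inner random quantity in the normalizing factor `d(s,ε)`: the maximum, over open
intervals `I = (a,b)` with `0 ≤ a ≤ b - ε` and endpoints in `{q_i} ∪ {0,1}`, of
`s(b-a)/(1 ∨ #{i : q_i ∈ I})`. -/
def dInner (s : ℕ) (ε : ℝ) (q : Fin s → ℝ) : ℝ :=
  WithBot.unbotD 0 (((((Finset.univ.image q) ∪ {0, 1}) ×ˢ ((Finset.univ.image q) ∪ {0, 1})).filter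
      (fun ab : ℝ × ℝ => 0 ≤ ab.1 ∧ ab.1 ≤ ab.2 - ε)).image fun ab =>
        (s : ℝ) * (ab.2 - ab.1) /
          max 1 ((Finset.univ.filter fun i => ab.1 < q i ∧ q i < ab.2).card : ℝ)).max

/-- The quantity `d(s,ε)`. -/
def dVal (s : ℕ) (ε : ℝ) : ℝ := ∫ q, dInner s ε q ∂(Q0 s)

open Classical in
/-- The normalizing factor `D(m,ε,π̲₀) = max{d(s,ε) : π̲₀ m ≤ s ≤ m}`. -/
def Dfac (m : ℕ) (ε pl : ℝ) : ℝ :=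
  WithBot.unbotD 1 (((Finset.range (m + 1)).filter fun s : ℕ => pl * (m : ℝ) ≤ (s : ℝ)).image fun s =>
    dVal s ε).max

open Classical in
/-- `inf_{λ ∈ [0,1-ε]} (1 ∨ #{i : p_i ≥ λ})/(m(1-λ))`. -/
def msInf (m : ℕ) (ε : ℝ) (p : Fin m → ℝ) : ℝ :=
  sInf ((fun lam =>
    (max 1 ((Finset.univ.filter fun i => lam ≤ p i).card : ℝ)) / (m * (1 - lam))) ''
      Set.Icc 0 (1 - ε))

/-- The min-Storey estimator `π̂^MS_{0,ε,π̲₀}`. -/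
def msEst (m : ℕ) (ε pl : ℝ) (p : Fin m → ℝ) : ℝ :=
  max pl (Cfac m ε pl * msInf m ε p)

open Classical in
/-- `inf` over open intervals `I = (a,b) ⊆ [κ,1]` with `|I| ≥ ε` of
`(1 ∨ #{i : p_i ∈ I})/(m |I|)`. -/
def imsInf (m : ℕ) (ε κ : ℝ) (p : Fin m → ℝ) : ℝ :=
  sInf {x : ℝ | ∃ a b : ℝ, κ ≤ a ∧ b ≤ 1 ∧ ε ≤ b - a ∧
    x = (max 1 ((Finset.univ.filter fun i => a < p i ∧ p i < b).card : ℝ)) / (m * (b - a))}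

/-- The interval-min-Storey estimator `π̂^IMS_{0,ε,π̲₀,κ}`. -/
def imsEst (m : ℕ) (ε pl κ : ℝ) (p : Fin m → ℝ) : ℝ :=
  max pl (Dfac m ε pl * imsInf m ε κ p)

open Classical in
/-- Empirical CDF `F̂_m(t) = m⁻¹ #{i : p_i ≤ t}`. -/
def Fhat (m : ℕ) (p : Fin m → ℝ) (t : ℝ) : ℝ :=
  ((Finset.univ.filter fun i => p i ≤ t).card : ℝ) / m

/-- The data-driven capping `κ̂ = sup{κ ∈ [0,1-ε] : F̂_m(κ) ≥ κ π̂^IMS_{0,ε,π̲₀,κ}/α}`. -/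
def kappaHat (m : ℕ) (ε pl α : ℝ) (p : Fin m → ℝ) : ℝ :=
  sSup {κ : ℝ | κ ∈ Set.Icc 0 (1 - ε) ∧ κ * imsEst m ε pl κ p / α ≤ Fhat m p κ}


/-! ### Auxiliary lemmas for Statement 18 -/

namespace S18aux

open Classical in
/-- The value associated to an interval `(a,b)` in the definition of `imsInf`. -/
def Sv (m : ℕ) (p : Fin m → ℝ) (a b : ℝ) : ℝ :=
  (max 1 ((Finset.univ.filter fun i => a < p i ∧ p i < b).card : ℝ)) / (m * (b - a))

open Classical in
def Sset (m : ℕ) (ε κ : ℝ) (p : Fin m → ℝ) : Set ℝ :=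
  {x : ℝ | ∃ a b : ℝ, κ ≤ a ∧ b ≤ 1 ∧ ε ≤ b - a ∧ x = Sv m p a b}

lemma imsInf_eq (m : ℕ) (ε κ : ℝ) (p : Fin m → ℝ) :
    imsInf m ε κ p = sInf (Sset m ε κ p) := rfl

variable {m : ℕ} {ε pl κ κ0 κ1 κ2 η : ℝ} {p : Fin m → ℝ}

lemma Sset_nonneg (hε : 0 < ε) (hm : 1 ≤ m) : ∀ x ∈ Sset m ε κ p, (0:ℝ) ≤ x := by
  rintro x ⟨a, b, _, _, hba, rfl⟩
  have hm0 : (0:ℝ) < m := by exact_mod_cast hm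
  have : (0:ℝ) < b - a := lt_of_lt_of_le hε hba
  have h1 : (0:ℝ) ≤ max 1 ((Finset.univ.filter fun i => a < p i ∧ p i < b).card : ℝ) :=
    le_trans zero_le_one (le_max_left _ _)
  exact div_nonneg h1 (by positivity)

lemma Sset_bddBelow (hε : 0 < ε) (hm : 1 ≤ m) : BddBelow (Sset m ε κ p) :=
  ⟨0, fun x hx => Sset_nonneg hε hm x hx⟩

lemma Sv_mem (hκ : κ ≤ 1 - ε) : Sv m p κ 1 ∈ Sset m ε κ p :=
  ⟨κ, 1, le_rfl, le_rfl, by linarith, rfl⟩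

lemma Sset_nonempty (hκ : κ ≤ 1 - ε) : (Sset m ε κ p).Nonempty :=
  ⟨Sv m p κ 1, Sv_mem hκ⟩

lemma Sset_anti (h : κ1 ≤ κ2) : Sset m ε κ2 p ⊆ Sset m ε κ1 p := by
  rintro x ⟨a, b, ha, hb, hba, rfl⟩
  exact ⟨a, b, le_trans h ha, hb, hba, rfl⟩

lemma imsInf_nonneg (hε : 0 < ε) (hm : 1 ≤ m) : 0 ≤ imsInf m ε κ p := by
  rw [imsInf_eq]
  exact Real.sInf_nonneg (fun x hx => Sset_nonneg hε hm x hx)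

lemma imsInf_mono (hε : 0 < ε) (hm : 1 ≤ m) (hκ2 : κ2 ≤ 1 - ε) (h12 : κ1 ≤ κ2) :
    imsInf m ε κ1 p ≤ imsInf m ε κ2 p := by
  rw [imsInf_eq, imsInf_eq]
  exact csInf_le_csInf (Sset_bddBelow hε hm) (Sset_nonempty hκ2) (Sset_anti h12)

lemma imsInf_le_inv (hε : 0 < ε) (hm : 1 ≤ m) (hκ0 : 0 ≤ κ) (hκ : κ ≤ 1 - ε) :
    imsInf m ε κ p ≤ 1 / ε := by
  rw [imsInf_eq]
  refine le_trans (csInf_le (Sset_bddBelow hε hm) (Sv_mem hκ)) ?_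
  have hm0 : (0:ℝ) < m := by exact_mod_cast hm
  have hcardn : (Finset.univ.filter fun i => κ < p i ∧ p i < 1).card ≤ m := by
    refine le_trans (Finset.card_filter_le _ _) ?_
    simp
  have hcard : ((Finset.univ.filter fun i => κ < p i ∧ p i < 1).card : ℝ) ≤ m := by
    exact_mod_cast hcardn
  have hnum : max 1 ((Finset.univ.filter fun i => κ < p i ∧ p i < 1).card : ℝ) ≤ m :=
    max_le (by exact_mod_cast hm) hcard
  have h1 : Sv m p κ 1 ≤ (m : ℝ) / (m * ε) := by
    unfold Sv
    exact div_le_div₀ (by positivity) hnum (by positivity) (by nlinarith)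
  refine le_trans h1 (le_of_eq ?_)
  field_simp

/-- Key quantitative lower bound for left-continuity of `imsInf`. -/
lemma imsInf_lower (hε : 0 < ε) (hm : 1 ≤ m)
    (hκ00 : 0 ≤ κ0) (hκ01 : κ0 ≤ 1 - ε) (hη : 0 < η)
    (hgap : ∀ i, p i < κ0 + ε → p i < κ0 + ε - η)
    (hκlo : κ0 - η ≤ κ) (hκhi : κ ≤ κ0) :
    imsInf m ε κ0 p * (ε / (ε + η)) ≤ imsInf m ε κ p := by
  have hm0 : (0:ℝ) < m := by exact_mod_cast hm
  have hεη : (0:ℝ) < ε + η := by linarith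
  have hr0 : (0:ℝ) ≤ ε / (ε + η) := by positivity
  have hr1 : ε / (ε + η) ≤ 1 := by
    rw [div_le_one hεη]; linarith
  have hg0 : 0 ≤ imsInf m ε κ0 p := imsInf_nonneg hε hm
  rw [imsInf_eq (κ := κ)]
  apply le_csInf (Sset_nonempty (le_trans hκhi hκ01))
  rintro x ⟨a, b, ha, hb1, hba, rfl⟩
  have hab : (0:ℝ) < b - a := lt_of_lt_of_le hε hba
  by_cases hA : κ0 ≤ a
  · -- the interval is also feasible for κ0
    have hx : Sv m p a b ∈ Sset m ε κ0 p := ⟨a, b, hA, hb1, hba, rfl⟩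
    have h1 : imsInf m ε κ0 p ≤ Sv m p a b := by
      rw [imsInf_eq]; exact csInf_le (Sset_bddBelow hε hm) hx
    calc imsInf m ε κ0 p * (ε / (ε + η)) ≤ imsInf m ε κ0 p * 1 :=
          mul_le_mul_of_nonneg_left hr1 hg0
      _ = imsInf m ε κ0 p := mul_one _
      _ ≤ Sv m p a b := h1
  · push_neg at hA
    have haη : κ0 - a ≤ η := by linarith
    set A : ℝ := max 1 ((Finset.univ.filter fun i => a < p i ∧ p i < b).card : ℝ) with hAdef
    have hA1 : (1:ℝ) ≤ A := le_max_left _ _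
    by_cases hB : κ0 + ε ≤ b
    · -- compare with the interval (κ0, b)
      set B : ℝ := max 1 ((Finset.univ.filter fun i => κ0 < p i ∧ p i < b).card : ℝ) with hBdef
      have hB1 : (1:ℝ) ≤ B := le_max_left _ _
      have hBA : B ≤ A := by
        apply max_le_max le_rfl
        have : (Finset.univ.filter fun i => κ0 < p i ∧ p i < b) ⊆
            (Finset.univ.filter fun i => a < p i ∧ p i < b) := by
          intro i hi
          simp only [Finset.mem_filter, Finset.mem_univ, true_and] at hi ⊢
          exact ⟨lt_trans hA hi.1, hi.2⟩
        exact_mod_cast Finset.card_le_card this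
      have hy : imsInf m ε κ0 p ≤ Sv m p κ0 b := by
        rw [imsInf_eq]
        exact csInf_le (Sset_bddBelow hε hm) ⟨κ0, b, le_rfl, hb1, by linarith, rfl⟩
      have hbκ0 : (0:ℝ) < b - κ0 := by linarith
      have key : Sv m p κ0 b * (ε / (ε + η)) ≤ Sv m p a b := by
        show B / (↑m * (b - κ0)) * (ε / (ε + η)) ≤ A / (↑m * (b - a))
        rw [div_mul_div_comm, div_le_div_iff₀ (by positivity) (by positivity)]
        have h1 : ε * (b - a) ≤ (b - κ0) * (ε + η) := by nlinarith
        calc B * ε * (↑m * (b - a)) = (↑m * B) * (ε * (b - a)) := by ring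
          _ ≤ (↑m * B) * ((b - κ0) * (ε + η)) :=
              mul_le_mul_of_nonneg_left h1 (by positivity)
          _ ≤ (↑m * A) * ((b - κ0) * (ε + η)) := by
              apply mul_le_mul_of_nonneg_right (by nlinarith) (by nlinarith)
          _ = A * (↑m * (b - κ0) * (ε + η)) := by ring
      calc imsInf m ε κ0 p * (ε / (ε + η)) ≤ Sv m p κ0 b * (ε / (ε + η)) :=
            mul_le_mul_of_nonneg_right hy hr0
        _ ≤ Sv m p a b := key
    · -- b < κ0 + ε : compare with the interval (κ0, κ0 + ε)
      push_neg at hB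
      set B : ℝ := max 1
        ((Finset.univ.filter fun i => κ0 < p i ∧ p i < κ0 + ε).card : ℝ) with hBdef
      have hB1 : (1:ℝ) ≤ B := le_max_left _ _
      have hbge : κ0 + ε - η ≤ b := by linarith
      have hBA : B ≤ A := by
        apply max_le_max le_rfl
        have : (Finset.univ.filter fun i => κ0 < p i ∧ p i < κ0 + ε) ⊆
            (Finset.univ.filter fun i => a < p i ∧ p i < b) := by
          intro i hi
          simp only [Finset.mem_filter, Finset.mem_univ, true_and] at hi ⊢
          refine ⟨lt_trans hA hi.1, ?_⟩
          exact lt_of_lt_of_le (hgap i hi.2) hbge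
        exact_mod_cast Finset.card_le_card this
      have hy : imsInf m ε κ0 p ≤ Sv m p κ0 (κ0 + ε) := by
        rw [imsInf_eq]
        exact csInf_le (Sset_bddBelow hε hm) ⟨κ0, κ0 + ε, le_rfl, by linarith, by linarith, rfl⟩
      have hbaη : b - a ≤ ε + η := by linarith
      have key : Sv m p κ0 (κ0 + ε) * (ε / (ε + η)) ≤ Sv m p a b := by
        show B / (↑m * (κ0 + ε - κ0)) * (ε / (ε + η)) ≤ A / (↑m * (b - a))
        have hεε : κ0 + ε - κ0 = ε := by ring
        rw [hεε, div_mul_div_comm, div_le_div_iff₀ (by positivity) (by positivity)]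
        calc B * ε * (↑m * (b - a)) = (↑m * B * ε) * (b - a) := by ring
          _ ≤ (↑m * B * ε) * (ε + η) := mul_le_mul_of_nonneg_left hbaη (by positivity)
          _ ≤ (↑m * A * ε) * (ε + η) :=
              mul_le_mul_of_nonneg_right
                (mul_le_mul_of_nonneg_right
                  (mul_le_mul_of_nonneg_left hBA hm0.le) hε.le) hεη.le
          _ = A * (↑m * ε * (ε + η)) := by ring
      calc imsInf m ε κ0 p * (ε / (ε + η)) ≤ Sv m p κ0 (κ0 + ε) * (ε / (ε + η)) :=
            mul_le_mul_of_nonneg_right hy hr0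
        _ ≤ Sv m p a b := key

/-- Left-continuity of `imsInf` in the capping. -/
lemma imsInf_CWA (hε : 0 < ε) (hm : 1 ≤ m) (hκ00 : 0 ≤ κ0) (hκ01 : κ0 ≤ 1 - ε) :
    ContinuousWithinAt (fun κ => imsInf m ε κ p) (Set.Iic κ0) κ0 := by
  classical
  rw [Metric.continuousWithinAt_iff]
  intro δ hδ
  -- the gap below κ0 + ε containing no p-value
  set G : Finset (Fin m) := Finset.univ.filter (fun i => p i < κ0 + ε) with hGdef
  set η0 : ℝ := if h : G.Nonempty then min 1 ((κ0 + ε) - G.sup' h p) else 1 with hη0def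
  have hη0pos : 0 < η0 := by
    rw [hη0def]
    split
    · rename_i h
      apply lt_min one_pos
      have : G.sup' h p < κ0 + ε := by
        rw [Finset.sup'_lt_iff]
        intro i hi
        simpa [hGdef] using hi
      linarith
    · exact one_pos
  have hgap0 : ∀ i, p i < κ0 + ε → p i ≤ κ0 + ε - η0 := by
    intro i hi
    have hne : G.Nonempty := ⟨i, by simp [hGdef, hi]⟩
    have h1 : p i ≤ G.sup' hne p := Finset.le_sup' p (by simp [hGdef, hi])
    rw [hη0def, dif_pos hne]
    have : min 1 ((κ0 + ε) - G.sup' hne p) ≤ (κ0 + ε) - G.sup' hne p := min_le_right _ _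
    linarith
  set η : ℝ := min (η0 / 2) (δ * ε ^ 2 / 2) with hηdef
  have hηpos : 0 < η := lt_min (by linarith) (by positivity)
  have hηη0 : η < η0 := lt_of_le_of_lt (min_le_left _ _) (by linarith)
  refine ⟨η, hηpos, ?_⟩
  intro κ hκIic hdist
  have hκκ0 : κ ≤ κ0 := hκIic
  have hκlo : κ0 - η ≤ κ := by
    rw [Real.dist_eq, abs_lt] at hdist
    linarith [hdist.1]
  have hgap : ∀ i, p i < κ0 + ε → p i < κ0 + ε - η := by
    intro i hi
    have := hgap0 i hi
    linarith
  have hlow := imsInf_lower (p := p) hε hm hκ00 hκ01 hηpos hgap hκlo hκκ0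
  have hhi : imsInf m ε κ p ≤ imsInf m ε κ0 p := imsInf_mono hε hm hκ01 hκκ0
  have hub : imsInf m ε κ0 p ≤ 1 / ε := imsInf_le_inv hε hm hκ00 hκ01
  have hg0 : 0 ≤ imsInf m ε κ0 p := imsInf_nonneg hε hm
  have hεη : (0:ℝ) < ε + η := by linarith
  -- imsInf κ0 - imsInf κ ≤ (1/ε) * (η/(ε+η)) ≤ η / ε^2 < δ
  have h1 : imsInf m ε κ0 p - imsInf m ε κ p ≤ imsInf m ε κ0 p * (η / (ε + η)) := by
    have : imsInf m ε κ0 p * (ε / (ε + η)) = imsInf m ε κ0 p * (1 - η / (ε + η)) := by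
      congr 1
      field_simp
      ring
    nlinarith [hlow]
  have h2 : imsInf m ε κ0 p * (η / (ε + η)) ≤ (1 / ε) * (η / ε) := by
    apply mul_le_mul hub _ (by positivity) (by positivity)
    apply div_le_div₀ (le_of_lt hηpos) le_rfl hε
    linarith
  have h3 : (1 / ε) * (η / ε) < δ := by
    have hηδ : η ≤ δ * ε ^ 2 / 2 := min_le_right _ _
    rw [div_mul_div_comm, one_mul, div_lt_iff₀ (by positivity)]
    nlinarith
  rw [Real.dist_eq, abs_lt]
  constructor <;> nlinarith

/-! ### Nonnegativity of the normalizing constant `Dfac` -/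

lemma dInner_nonneg (s : ℕ) (hε : 0 < ε) (q : Fin s → ℝ) : 0 ≤ dInner s ε q := by
  classical
  rw [dInner]
  set t := (((((Finset.univ.image q) ∪ {0, 1}) ×ˢ ((Finset.univ.image q) ∪ {0, 1})).filter
      (fun ab : ℝ × ℝ => 0 ≤ ab.1 ∧ ab.1 ≤ ab.2 - ε)).image fun ab =>
        (s : ℝ) * (ab.2 - ab.1) /
          max 1 ((Finset.univ.filter fun i => ab.1 < q i ∧ q i < ab.2).card : ℝ)) with ht
  cases hmax : t.max with
  | bot => simp [hmax]
  | coe x =>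
    have hx : x ∈ t := Finset.mem_of_max hmax
    rw [ht, Finset.mem_image] at hx
    obtain ⟨ab, hab, rfl⟩ := hx
    rw [Finset.mem_filter] at hab
    have h1 : ε ≤ ab.2 - ab.1 := by linarith [hab.2.2, hab.2.1]
    have h2 : (0:ℝ) ≤ ab.2 - ab.1 := le_trans (le_of_lt hε) h1
    have := div_nonneg (mul_nonneg (Nat.cast_nonneg s) h2)
      (le_trans zero_le_one (le_max_left 1
        ((Finset.univ.filter fun i => ab.1 < q i ∧ q i < ab.2).card : ℝ)))
    simpa [hmax] using this

lemma dVal_nonneg (s : ℕ) (hε : 0 < ε) : 0 ≤ dVal s ε :=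
  MeasureTheory.integral_nonneg (fun q => dInner_nonneg s hε q)

lemma Dfac_nonneg (hε : 0 < ε) : 0 ≤ Dfac m ε pl := by
  classical
  rw [Dfac]
  set t := (((Finset.range (m + 1)).filter fun s : ℕ => pl * (m : ℝ) ≤ (s : ℝ)).image fun s =>
    dVal s ε) with ht
  cases hmax : t.max with
  | bot => simp [hmax]
  | coe x =>
    have hx : x ∈ t := Finset.mem_of_max hmax
    rw [ht, Finset.mem_image] at hx
    obtain ⟨s, _, rfl⟩ := hx
    simpa [hmax] using dVal_nonneg s hε

/-! ### The estimator `imsEst` -/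

lemma pl_le_imsEst : pl ≤ imsEst m ε pl κ p := le_max_left _ _

lemma imsEst_mono (hε : 0 < ε) (hm : 1 ≤ m) (hκ2 : κ2 ≤ 1 - ε) (h12 : κ1 ≤ κ2) :
    imsEst m ε pl κ1 p ≤ imsEst m ε pl κ2 p :=
  max_le_max le_rfl (mul_le_mul_of_nonneg_left (imsInf_mono hε hm hκ2 h12) (Dfac_nonneg hε))

lemma imsEst_CWA (hε : 0 < ε) (hm : 1 ≤ m) (hκ00 : 0 ≤ κ0) (hκ01 : κ0 ≤ 1 - ε) :
    ContinuousWithinAt (fun κ => imsEst m ε pl κ p) (Set.Iic κ0) κ0 := by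
  have h := imsInf_CWA (p := p) hε hm hκ00 hκ01
  exact continuousWithinAt_const.max (continuousWithinAt_const.mul h)

/-! ### Order statistics -/

open Classical in
lemma orderStat_le_of_card (hp : ∀ i, p i ∈ Set.Icc (0:ℝ) 1) {k : ℕ} {t : ℝ} (ht : 0 ≤ t)
    (hk : k ≤ (Finset.univ.filter fun i => p i ≤ t).card) : orderStat p k ≤ t := by
  rw [orderStat]
  split
  · exact ht
  · rename_i hk0
    refine csInf_le ⟨0, fun s hs => ?_⟩ hk
    by_contra hs0
    push_neg at hs0
    have : (Finset.univ.filter fun i => p i ≤ s) = ∅ := by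
      apply Finset.filter_false_of_mem
      intro i _
      push_neg
      exact lt_of_lt_of_le hs0 (hp i).1
    rw [Set.mem_setOf_eq, this] at hs
    simp at hs
    omega

open Classical in
lemma card_le_of_orderStat_le (hm : 1 ≤ m) (hp : ∀ i, p i ∈ Set.Icc (0:ℝ) 1)
    {k : ℕ} {t : ℝ} (hk1 : 1 ≤ k) (hkm : k ≤ m) (h : orderStat p k ≤ t) :
    k ≤ (Finset.univ.filter fun i => p i ≤ t).card := by
  have hk0 : k ≠ 0 := by omega
  rw [orderStat, if_neg hk0] at h
  set T : Set ℝ := {s : ℝ | k ≤ (Finset.univ.filter fun i => p i ≤ s).card} with hT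
  have hTne : (1:ℝ) ∈ T := by
    rw [hT, Set.mem_setOf_eq]
    have : (Finset.univ.filter fun i => p i ≤ (1:ℝ)) = Finset.univ := by
      apply Finset.filter_true_of_mem
      intro i _
      exact (hp i).2
    rw [this, Finset.card_univ, Fintype.card_fin]
    exact hkm
  have hTbdd : BddBelow T := by
    refine ⟨0, fun s hs => ?_⟩
    by_contra hs0
    push_neg at hs0
    have : (Finset.univ.filter fun i => p i ≤ s) = ∅ := by
      apply Finset.filter_false_of_mem
      intro i _
      push_neg
      exact lt_of_lt_of_le hs0 (hp i).1
    rw [hT, Set.mem_setOf_eq, this] at hs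
    simp at hs
    omega
  -- the infimum of T belongs to T
  set c : ℝ := sInf T with hc
  have hcT : c ∈ T := by
    by_contra hcT
    rw [hT, Set.mem_setOf_eq] at hcT
    push_neg at hcT
    set G : Finset (Fin m) := Finset.univ.filter (fun i => c < p i) with hGdef
    by_cases hG : G.Nonempty
    · set c' : ℝ := G.inf' hG p with hc'
      have hcc' : c < c' := by
        rw [hc', Finset.lt_inf'_iff]
        intro i hi
        simpa [hGdef] using hi
      have hlb : ∀ s ∈ T, c' ≤ s := by
        intro s hs
        by_contra hsc
        push_neg at hsc
        have hsub : (Finset.univ.filter fun i => p i ≤ s) ⊆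
            (Finset.univ.filter fun i => p i ≤ c) := by
          intro i hi
          simp only [Finset.mem_filter, Finset.mem_univ, true_and] at hi ⊢
          by_contra hic
          push_neg at hic
          have hiG : i ∈ G := by simp [hGdef, hic]
          have := Finset.inf'_le p hiG
          rw [← hc'] at this
          linarith
        rw [hT, Set.mem_setOf_eq] at hs
        have := Finset.card_le_card hsub
        omega
      have : c' ≤ c := le_csInf ⟨1, hTne⟩ hlb
      linarith
    · -- no p-value exceeds c : then all p-values are ≤ c
      have : (Finset.univ.filter fun i => p i ≤ c) = Finset.univ := by
        apply Finset.filter_true_of_mem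
        intro i _
        by_contra hic
        push_neg at hic
        exact hG ⟨i, by simp [hGdef, hic]⟩
      rw [this, Finset.card_univ, Fintype.card_fin] at hcT
      omega
  have hct : c ≤ t := h
  rw [hT, Set.mem_setOf_eq] at hcT
  refine le_trans hcT (Finset.card_le_card ?_)
  intro i hi
  simp only [Finset.mem_filter, Finset.mem_univ, true_and] at hi ⊢
  linarith

/-! ### The empirical CDF -/

lemma Fhat_nonneg (m : ℕ) (p : Fin m → ℝ) (t : ℝ) : 0 ≤ Fhat m p t := by
  rw [Fhat]; positivity

lemma Fhat_mono (hm : 1 ≤ m) {s t : ℝ} (hst : s ≤ t) :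
    Fhat m p s ≤ Fhat m p t := by
  classical
  have hm0 : (0:ℝ) < m := by exact_mod_cast hm
  rw [Fhat, Fhat]
  apply (div_le_div_iff_of_pos_right hm0).mpr
  refine Nat.cast_le.mpr (Finset.card_le_card ?_)
  intro i hi
  simp only [Finset.mem_filter, Finset.mem_univ, true_and] at hi ⊢
  linarith

end S18aux

open Classical in
/-- Lemma on `κ̂`: for a fixed `p`-value vector, (i) the IMS estimator
is nondecreasing and left-continuous in the capping `κ`; (ii) the supremum defining `κ̂`
is attained; (iii) the rejection set of the IMS-`κ̂` procedure is `{i : p_i ≤ κ̂}`;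
(iv) every `κ`-capped IMS procedure rejects a subset of `{i : p_i ≤ κ̂}`. -/
theorem statement18 (m : ℕ) (hm : 1 ≤ m)
    (ε pl α : ℝ) (hε : ε ∈ Set.Ioo (0 : ℝ) 1) (hpl : pl ∈ Set.Ioo (0 : ℝ) 1)
    (hα : α ∈ Set.Ioo (0 : ℝ) 1)
    (p : Fin m → ℝ) (hp : ∀ i, p i ∈ Set.Icc (0 : ℝ) 1) :
    (MonotoneOn (fun κ => imsEst m ε pl κ p) (Set.Icc 0 (1 - ε)) ∧
      ∀ κ0 ∈ Set.Icc (0 : ℝ) (1 - ε),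
        ContinuousWithinAt (fun κ => imsEst m ε pl κ p) (Set.Iic κ0) κ0) ∧
    (kappaHat m ε pl α p * imsEst m ε pl (kappaHat m ε pl α p) p / α ≤
      Fhat m p (kappaHat m ε pl α p)) ∧
    (rejectSet m α (fun q => imsEst m ε pl (kappaHat m ε pl α q) q)
        (fun q => kappaHat m ε pl α q) p
      = Finset.univ.filter fun i => p i ≤ kappaHat m ε pl α p) ∧
    (∀ κ ∈ Set.Icc (0 : ℝ) (1 - ε),
      rejectSet m α (imsEst m ε pl κ) (fun _ => κ) p ⊆
        Finset.univ.filter fun i => p i ≤ kappaHat m ε pl α p) := by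
  have hm0 : (0:ℝ) < m := by exact_mod_cast hm
  -- Part (i)
  have hmono : MonotoneOn (fun κ => imsEst m ε pl κ p) (Set.Icc 0 (1 - ε)) := by
    intro κ1 _ κ2 h2 h12
    exact S18aux.imsEst_mono hε.1 hm h2.2 h12
  have hcont : ∀ κ0 ∈ Set.Icc (0:ℝ) (1 - ε),
      ContinuousWithinAt (fun κ => imsEst m ε pl κ p) (Set.Iic κ0) κ0 :=
    fun κ0 h => S18aux.imsEst_CWA hε.1 hm h.1 h.2
  -- the feasible set for the data-driven capping
  set K : Set ℝ :=
    {κ : ℝ | κ ∈ Set.Icc 0 (1 - ε) ∧ κ * imsEst m ε pl κ p / α ≤ Fhat m p κ} with hKdef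
  set κh : ℝ := kappaHat m ε pl α p with hκh
  have hKap : kappaHat m ε pl α p = sSup K := by rw [hKdef]; rfl
  have hK0 : (0:ℝ) ∈ K := by
    rw [hKdef]
    refine ⟨⟨le_rfl, by linarith [hε.2]⟩, ?_⟩
    rw [zero_mul, zero_div]
    exact S18aux.Fhat_nonneg m p 0
  have hKbdd : BddAbove K := by
    refine ⟨1 - ε, fun κ hκ => ?_⟩
    rw [hKdef] at hκ
    exact hκ.1.2
  have hκh0 : 0 ≤ κh := by rw [hκh, hKap]; exact le_csSup hKbdd hK0
  have hκh1 : κh ≤ 1 - ε := by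
    rw [hκh, hKap]
    refine csSup_le ⟨0, hK0⟩ (fun κ hκ => ?_)
    rw [hKdef] at hκ
    exact hκ.1.2
  -- Part (ii)
  have hii : κh * imsEst m ε pl κh p / α ≤ Fhat m p κh := by
    by_contra hcon
    push_neg at hcon
    set δ : ℝ := κh * imsEst m ε pl κh p / α - Fhat m p κh with hδdef
    have hδ : 0 < δ := by rw [hδdef]; linarith
    have hCWA : ContinuousWithinAt (fun κ => κ * imsEst m ε pl κ p / α) (Set.Iic κh) κh :=
      (continuousWithinAt_id.mul (hcont κh ⟨hκh0, hκh1⟩)).div_const α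
    rw [Metric.continuousWithinAt_iff] at hCWA
    obtain ⟨η, hη, hball⟩ := hCWA δ hδ
    obtain ⟨κ, hκK, hκgt⟩ := exists_lt_of_lt_csSup ⟨0, hK0⟩
      (show κh - η < sSup K by rw [← hKap, ← hκh]; linarith)
    have hκle : κ ≤ κh := by rw [hκh, hKap]; exact le_csSup hKbdd hκK
    have hdist : dist κ κh < η := by rw [Real.dist_eq, abs_lt]; constructor <;> linarith
    have hnear := hball (show κ ∈ Set.Iic κh from hκle) hdist
    rw [Real.dist_eq, abs_lt] at hnear
    rw [hKdef] at hκK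
    have hκmem := hκK.2
    have hmonoF : Fhat m p κ ≤ Fhat m p κh := S18aux.Fhat_mono hm hκle
    rw [hδdef] at hnear
    linarith [hnear.1]
  -- Part (iii)
  have hπpos : 0 < imsEst m ε pl κh p := lt_of_lt_of_le hpl.1 S18aux.pl_le_imsEst
  have hπ0 : imsEst m ε pl κh p ≠ 0 := ne_of_gt hπpos
  set R : ℕ := (Finset.univ.filter fun i => p i ≤ κh).card with hRdef
  have hRm : R ≤ m := by
    rw [hRdef]
    exact le_trans (Finset.card_filter_le _ _) (by simp)
  have hFκh : Fhat m p κh = (R : ℝ) / m := by rw [Fhat, hRdef]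
  have hκhle : κh * (↑m * imsEst m ε pl κh p) ≤ α * R := by
    have h2 : κh * imsEst m ε pl κh p / α ≤ (R:ℝ)/m := by rw [← hFκh]; exact hii
    rw [div_le_div_iff₀ hα.1 hm0] at h2
    nlinarith
  have hthreshR : bhThresh m α κh (imsEst m ε pl κh p) R = κh := by
    rw [bhThresh, if_neg hπ0, min_eq_left]
    rw [le_div_iff₀ (by positivity)]
    linarith [hκhle]
  have hQR : orderStat p R ≤ bhThresh m α κh (imsEst m ε pl κh p) R := by
    rw [hthreshR]
    exact S18aux.orderStat_le_of_card hp hκh0 hRdef.le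
  set kh : ℕ := khat m α κh (imsEst m ε pl κh p) p with hkh
  have hRkh : R ≤ kh := Nat.le_findGreatest hRm hQR
  have hkhR : kh ≤ R := by
    rcases Nat.eq_zero_or_pos kh with h0 | hpos
    · omega
    · have hQ : orderStat p kh ≤ bhThresh m α κh (imsEst m ε pl κh p) kh := by
        rw [hkh, khat]
        exact Nat.findGreatest_spec
          (P := fun k => orderStat p k ≤ bhThresh m α κh (imsEst m ε pl κh p) k) hRm hQR
      have hle : orderStat p kh ≤ κh := by
        rw [bhThresh, if_neg hπ0] at hQ
        exact le_trans hQ (min_le_left _ _)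
      have hkhm : kh ≤ m := Nat.findGreatest_le m
      have hc := S18aux.card_le_of_orderStat_le hm hp hpos hkhm hle
      rw [← hRdef] at hc
      exact hc
  have hkheq : kh = R := le_antisymm hkhR hRkh
  have hthresh : bhThresh m α κh (imsEst m ε pl κh p) kh = κh := by
    rw [hkheq]; exact hthreshR
  have hiii : rejectSet m α (fun q => imsEst m ε pl (kappaHat m ε pl α q) q)
      (fun q => kappaHat m ε pl α q) p
      = Finset.univ.filter fun i => p i ≤ κh := by
    simp only [rejectSet, ← hκh, ← hkh, hthresh]
  -- Part (iv)
  have hiv : ∀ κ ∈ Set.Icc (0:ℝ) (1 - ε),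
      rejectSet m α (imsEst m ε pl κ) (fun _ => κ) p ⊆
        Finset.univ.filter fun i => p i ≤ κh := by
    intro κ hκ
    have hπκ : 0 < imsEst m ε pl κ p := lt_of_lt_of_le hpl.1 S18aux.pl_le_imsEst
    have hπκ0 : imsEst m ε pl κ p ≠ 0 := ne_of_gt hπκ
    set kκ : ℕ := khat m α κ (imsEst m ε pl κ p) p with hkκ
    set t : ℝ := bhThresh m α κ (imsEst m ε pl κ p) kκ with htdef
    have ht_eq : t = min κ (α * kκ / (m * imsEst m ε pl κ p)) := by
      rw [htdef, bhThresh, if_neg hπκ0]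
    have ht0 : 0 ≤ t := by
      rw [ht_eq]
      exact le_min hκ.1 (div_nonneg (mul_nonneg hα.1.le (Nat.cast_nonneg _))
        (mul_nonneg hm0.le hπκ.le))
    have htκ : t ≤ κ := by rw [ht_eq]; exact min_le_left _ _
    have ht1 : t ≤ 1 - ε := le_trans htκ hκ.2
    have hP0 : orderStat p 0 ≤ bhThresh m α κ (imsEst m ε pl κ p) 0 := by
      have h1 : orderStat p 0 = 0 := by rw [orderStat]; simp
      rw [h1, bhThresh, if_neg hπκ0]
      exact le_min hκ.1 (div_nonneg (mul_nonneg hα.1.le (Nat.cast_nonneg _))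
        (mul_nonneg hm0.le hπκ.le))
    have hQ : orderStat p kκ ≤ t := by
      rw [htdef, hkκ, khat]
      exact Nat.findGreatest_spec
        (P := fun k => orderStat p k ≤ bhThresh m α κ (imsEst m ε pl κ p) k)
        (Nat.zero_le m) hP0
    have hcard : kκ ≤ (Finset.univ.filter fun i => p i ≤ t).card := by
      rcases Nat.eq_zero_or_pos kκ with h0 | hpos
      · rw [h0]; exact Nat.zero_le _
      · exact S18aux.card_le_of_orderStat_le hm hp hpos (Nat.findGreatest_le m) hQ
    have hFt : (kκ : ℝ) / m ≤ Fhat m p t := by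
      rw [Fhat]
      apply (div_le_div_iff_of_pos_right hm0).mpr
      exact_mod_cast hcard
    have htK : t ∈ K := by
      rw [hKdef]
      refine ⟨⟨ht0, ht1⟩, ?_⟩
      have h1 : imsEst m ε pl t p ≤ imsEst m ε pl κ p := S18aux.imsEst_mono hε.1 hm hκ.2 htκ
      have h2 : t * imsEst m ε pl t p ≤ t * imsEst m ε pl κ p :=
        mul_le_mul_of_nonneg_left h1 ht0
      have h3 : t * imsEst m ε pl κ p ≤ α * kκ / m := by
        have ht' : t ≤ α * kκ / (m * imsEst m ε pl κ p) := by
          rw [ht_eq]; exact min_le_right _ _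
        have h4 := (le_div_iff₀ (by positivity : (0:ℝ) < ↑m * imsEst m ε pl κ p)).mp ht'
        rw [le_div_iff₀ hm0]
        nlinarith
      calc t * imsEst m ε pl t p / α ≤ (α * ↑kκ / ↑m) / α :=
            (div_le_div_iff_of_pos_right hα.1).mpr (le_trans h2 h3)
        _ = (kκ:ℝ)/↑m := by
            have hαne : α ≠ 0 := hα.1.ne'
            have hmne : (m:ℝ) ≠ 0 := hm0.ne'
            field_simp
        _ ≤ Fhat m p t := hFt
    have htκh : t ≤ κh := by rw [hκh, hKap]; exact le_csSup hKbdd htK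
    intro i hi
    simp only [rejectSet, Finset.mem_filter, Finset.mem_univ, true_and,
      ← hkκ, ← htdef] at hi
    simp only [Finset.mem_filter, Finset.mem_univ, true_and]
    exact le_trans hi htκh
  exact ⟨⟨hmono, hcont⟩, hii, hiii, hiv⟩

end
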